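/- arXiv:1905.09957 — 2 statements merged into one kernel-verified Lean document; each statement's English description precedes it below -/
import Mathlib

section
/- Let g : ℝ → ℝ be differentiable, non-decreasing, and convex, w ∈ ℝ^d, x ∈ ℝ^d, y ∈ {−1, 1}, and ε > 0. Then max over x' with ‖x' − x‖_∞ ≤ ε of g(−y⟨w, x'⟩) equals g(−y⟨w, x⟩ + ε‖w‖₁). -/
/-!
On the `ℓ_∞` ball of radius `ε` around `x`, the linear form `⟨c, ·⟩` is maximised at
`x + ε • sign c`, where it takes the value `⟨c, x⟩ + ε‖c‖₁`. A monotone `g` carries this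
maximiser along, and for `c = -y • w` with `|y| = 1` we have `‖c‖₁ = ‖w‖₁`.
-/

open Finset

section LinearFormOnBox

variable {ι : Type*} [Fintype ι] {ε : ℝ}

theorem sum_mul_le_add_mul_sum_abs_of_abs_sub_le (c x x' : ι → ℝ)
    (h : ∀ i, |x' i - x i| ≤ ε) :
    ∑ i, c i * x' i ≤ ∑ i, c i * x i + ε * ∑ i, |c i| := by
  have hdev : ∀ i, c i * (x' i - x i) ≤ ε * |c i| := fun i =>
    calc c i * (x' i - x i) ≤ |c i| * |x' i - x i| := by rw [← abs_mul]; exact le_abs_self _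
      _ ≤ |c i| * ε := mul_le_mul_of_nonneg_left (h i) (abs_nonneg _)
      _ = ε * |c i| := mul_comm _ _
  calc ∑ i, c i * x' i = ∑ i, c i * x i + ∑ i, c i * (x' i - x i) := by
        rw [← sum_add_distrib]; exact sum_congr rfl fun i _ => by ring
    _ ≤ ∑ i, c i * x i + ε * ∑ i, |c i| := by
        rw [mul_sum]; exact add_le_add_right (sum_le_sum fun i _ => hdev i) _

theorem sum_mul_add_mul_sign (c x : ι → ℝ) :
    ∑ i, c i * (x i + ε * SignType.sign (c i)) = ∑ i, c i * x i + ε * ∑ i, |c i| := by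
  simp only [mul_add, sum_add_distrib, mul_sum, ← self_mul_sign]
  congr 1
  exact sum_congr rfl fun i _ => by ring

theorem isGreatest_sum_mul_image_abs_sub_le (c x : ι → ℝ) (hε : 0 ≤ ε) :
    IsGreatest ((fun x' : ι → ℝ => ∑ i, c i * x' i) '' {x' : ι → ℝ | ∀ i, |x' i - x i| ≤ ε})
      (∑ i, c i * x i + ε * ∑ i, |c i|) := by
  refine ⟨⟨fun i => x i + ε * SignType.sign (c i), fun i => ?_, sum_mul_add_mul_sign c x⟩, ?_⟩
  · have hsign : |(SignType.sign (c i) : ℝ)| ≤ 1 := by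
      rcases SignType.sign (c i) with _ | _ | _ <;> simp
    rw [add_sub_cancel_left, abs_mul, abs_of_nonneg hε]
    exact mul_le_of_le_one_right hε hsign
  · rintro _ ⟨x', hx', rfl⟩
    exact sum_mul_le_add_mul_sum_abs_of_abs_sub_le c x x' hx'

end LinearFormOnBox

theorem one_layer_adversarial_loss_general (d : ℕ) (g : ℝ → ℝ)
    (hmono : Monotone g)
    (w x : Fin d → ℝ) (y : ℝ) (hy : y = 1 ∨ y = -1) (ε : ℝ) (hε : 0 < ε) :
    IsGreatest
      {v : ℝ | ∃ x' : Fin d → ℝ, (∀ i, |x' i - x i| ≤ ε) ∧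
        v = g (-y * ∑ i, w i * x' i)}
      (g (-y * ∑ i, w i * x i + ε * ∑ i, |w i|)) := by
  have habs : ∀ i, |-y * w i| = |w i| := fun i => by
    rcases hy with rfl | rfl <;> simp
  have hmax := hmono.map_isGreatest
    (isGreatest_sum_mul_image_abs_sub_le (fun i => -y * w i) x hε.le)
  simp only [habs, mul_assoc, ← mul_sum, Set.image_image] at hmax
  exact (Set.ext fun v => exists_congr fun x' => and_congr_right' eq_comm) ▸ hmax

/-- For a differentiable, non-decreasing, convex `g`, the adversarial value of the
one-layer loss `g(-y⟨w,x'⟩)` over the `ℓ_∞` ball of radius `ε` around `x` equals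
the soft-margin value `g(-y⟨w,x⟩ + ε‖w‖₁)`. -/
theorem one_layer_adversarial_loss (d : ℕ) (g : ℝ → ℝ)
    (hdiff : Differentiable ℝ g) (hmono : Monotone g) (hconv : ConvexOn ℝ Set.univ g)
    (w x : Fin d → ℝ) (y : ℝ) (hy : y = 1 ∨ y = -1) (ε : ℝ) (hε : 0 < ε) :
    IsGreatest
      {v : ℝ | ∃ x' : Fin d → ℝ, (∀ i, |x' i - x i| ≤ ε) ∧
        v = g (-y * ∑ i, w i * x' i)}
      (g (-y * ∑ i, w i * x i + ε * ∑ i, |w i|)) :=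
  one_layer_adversarial_loss_general d g hmono w x y hy ε hε
end

section
/- Let g : ℝ → ℝ be differentiable, non-decreasing, and convex, and fix z ∈ ℝ, w ∈ ℝ^d with w ≠ 0, ε > 0, and y ∈ {−1,1}. For Δ ∈ ℝ^d with ⟨w,Δ⟩ ≠ 0, define A(Δ) = (|g(z + δ) − g(z)| / |δ|) · Σᵢ |wᵢ Δᵢ| where δ = −y⟨w, Δ⟩. Then the supremum of A(Δ) over ‖Δ‖_∞ ≤ ε equals g(z + ε‖w‖₁) − g(z), attained at Δᵢ = −y·sign(wᵢ)·ε. -/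
/-- The 1-norm of the IG attribution of a one-layer loss: with
`A(Δ) = (|g(z+δ)-g(z)|/|δ|) ∑ᵢ |wᵢΔᵢ|`, `δ = -y⟨w,Δ⟩`, the supremum of `A` over the
`ℓ_∞` ball of radius `ε` equals `g(z+ε‖w‖₁) - g(z)`, attained at `Δᵢ = -y sign(wᵢ) ε`. -/
theorem one_layer_ig_norm_sup (d : ℕ) (g : ℝ → ℝ)
    (hdiff : Differentiable ℝ g) (hmono : Monotone g) (hconv : ConvexOn ℝ Set.univ g)
    (z : ℝ) (w : Fin d → ℝ) (hw : w ≠ 0) (ε : ℝ) (hε : 0 < ε)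
    (y : ℝ) (hy : y = 1 ∨ y = -1) :
    sSup {v : ℝ | ∃ Δ : Fin d → ℝ, (∀ i, |Δ i| ≤ ε) ∧ (∑ i, w i * Δ i) ≠ 0 ∧
        v = (|g (z + (-y * ∑ i, w i * Δ i)) - g z| / |(-y * ∑ i, w i * Δ i)|)
            * ∑ i, |w i * Δ i|}
      = g (z + ε * ∑ i, |w i|) - g z ∧
    (|g (z + (-y * ∑ i, w i * (-y * Real.sign (w i) * ε))) - g z|
        / |(-y * ∑ i, w i * (-y * Real.sign (w i) * ε))|)
        * ∑ i, |w i * (-y * Real.sign (w i) * ε)|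
      = g (z + ε * ∑ i, |w i|) - g z := by
  have hy1 : |y| = 1 := by rcases hy with rfl | rfl <;> norm_num
  have hyy : y * y = 1 := by rcases hy with rfl | rfl <;> norm_num
  have hy0 : y ≠ 0 := by rcases hy with rfl | rfl <;> norm_num
  set S : ℝ := ∑ i, |w i| with hSdef
  have hS : 0 < S := by
    obtain ⟨i, hi⟩ : ∃ i, w i ≠ 0 := by
      by_contra h; push_neg at h; exact hw (funext h)
    exact Finset.sum_pos' (fun j _ => abs_nonneg _) ⟨i, Finset.mem_univ i, abs_pos.2 hi⟩
  have hεS : 0 < ε * S := mul_pos hε hS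
  have slope_eq : ∀ t : ℝ, t ≠ 0 → |g (z + t) - g z| / |t| = (g (z + t) - g z) / t := by
    intro t ht
    rcases ht.lt_or_gt with h | h
    · rw [abs_of_neg h, abs_of_nonpos (sub_nonpos.2 (hmono (by linarith))), neg_div_neg_eq]
    · rw [abs_of_pos h, abs_of_nonneg (sub_nonneg.2 (hmono (by linarith)))]
  have slope_nonneg : ∀ t : ℝ, t ≠ 0 → 0 ≤ (g (z + t) - g z) / t := by
    intro t ht; rw [← slope_eq t ht]; positivity
  have slope_le : ∀ t : ℝ, t ≠ 0 → t ≤ ε * S →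
      (g (z + t) - g z) / t ≤ (g (z + ε * S) - g z) / (ε * S) := by
    intro t ht hle
    have h := hconv.secant_mono (a := z) (x := z + t) (y := z + ε * S)
      (Set.mem_univ _) (Set.mem_univ _) (Set.mem_univ _)
      (fun h => ht (by linarith))
      (fun h => hεS.ne' (by linarith))
      (by linarith)
    simpa using h
  have hsgn : ∀ x : ℝ, x * Real.sign x = |x| := by
    intro x
    rcases lt_trichotomy x 0 with h | h | h
    · rw [Real.sign_of_neg h, abs_of_neg h]; ring
    · simp [h]
    · rw [Real.sign_of_pos h, abs_of_pos h]; ring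
  have hsum1 : (∑ i, w i * (-y * Real.sign (w i) * ε)) = (-y * ε) * S := by
    calc (∑ i, w i * (-y * Real.sign (w i) * ε))
        = ∑ i, (-y * ε) * |w i| := by
          refine Finset.sum_congr rfl fun i _ => ?_
          rw [← hsgn (w i)]; ring
      _ = (-y * ε) * S := by rw [hSdef, ← Finset.mul_sum]
  have hsum2 : (∑ i, |w i * (-y * Real.sign (w i) * ε)|) = ε * S := by
    calc (∑ i, |w i * (-y * Real.sign (w i) * ε)|)
        = ∑ i, ε * |w i| := by
          refine Finset.sum_congr rfl fun i _ => ?_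
          rw [show w i * (-y * Real.sign (w i) * ε) = (-y * ε) * (w i * Real.sign (w i)) by ring,
            hsgn, abs_mul, abs_abs, abs_mul, abs_neg, hy1, abs_of_pos hε, one_mul]
      _ = ε * S := by rw [hSdef, ← Finset.mul_sum]
  have hdelta : -y * (∑ i, w i * (-y * Real.sign (w i) * ε)) = ε * S := by
    rw [hsum1]; nlinarith [hyy]
  have hatt : (|g (z + (-y * ∑ i, w i * (-y * Real.sign (w i) * ε))) - g z|
        / |(-y * ∑ i, w i * (-y * Real.sign (w i) * ε))|)
        * ∑ i, |w i * (-y * Real.sign (w i) * ε)| = g (z + ε * S) - g z := by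
    rw [hsum2, hdelta, abs_of_pos hεS,
      abs_of_nonneg (sub_nonneg.2 (hmono (by linarith)))]
    field_simp
  have hmemv : (g (z + ε * S) - g z) ∈ {v : ℝ | ∃ Δ : Fin d → ℝ,
      (∀ i, |Δ i| ≤ ε) ∧ (∑ i, w i * Δ i) ≠ 0 ∧
        v = (|g (z + (-y * ∑ i, w i * Δ i)) - g z| / |(-y * ∑ i, w i * Δ i)|)
            * ∑ i, |w i * Δ i|} := by
    refine ⟨fun i => -y * Real.sign (w i) * ε, fun i => ?_, ?_, hatt.symm⟩
    · have hsle : |Real.sign (w i)| ≤ 1 := by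
        rcases lt_trichotomy (w i) 0 with h | h | h
        · rw [Real.sign_of_neg h]; norm_num
        · simp [h]
        · rw [Real.sign_of_pos h]; norm_num
      calc |(-y * Real.sign (w i) * ε)| = |y| * |Real.sign (w i)| * ε := by
            rw [abs_mul, abs_mul, abs_neg, abs_of_pos hε]
        _ ≤ 1 * 1 * ε := by
            apply mul_le_mul_of_nonneg_right _ hε.le
            rw [hy1]; exact mul_le_mul_of_nonneg_left hsle (by norm_num)
        _ = ε := by ring
    · rw [hsum1]
      exact mul_ne_zero (mul_ne_zero (neg_ne_zero.2 hy0) hε.ne') hS.ne'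
  have hub : ∀ v ∈ {v : ℝ | ∃ Δ : Fin d → ℝ,
      (∀ i, |Δ i| ≤ ε) ∧ (∑ i, w i * Δ i) ≠ 0 ∧
        v = (|g (z + (-y * ∑ i, w i * Δ i)) - g z| / |(-y * ∑ i, w i * Δ i)|)
            * ∑ i, |w i * Δ i|}, v ≤ g (z + ε * S) - g z := by
    rintro v ⟨Δ, hΔ, hs, rfl⟩
    have hsy : -y * ∑ i, w i * Δ i ≠ 0 := mul_ne_zero (neg_ne_zero.2 hy0) hs
    have hP : (∑ i, |w i * Δ i|) ≤ ε * S := by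
      rw [hSdef, Finset.mul_sum]
      refine Finset.sum_le_sum fun i _ => ?_
      rw [abs_mul]
      calc |w i| * |Δ i| ≤ |w i| * ε := mul_le_mul_of_nonneg_left (hΔ i) (abs_nonneg _)
        _ = ε * |w i| := mul_comm _ _
    have hPnn : 0 ≤ ∑ i, |w i * Δ i| := Finset.sum_nonneg fun i _ => abs_nonneg _
    have hδle : -y * ∑ i, w i * Δ i ≤ ε * S := by
      calc -y * ∑ i, w i * Δ i ≤ |(-y) * ∑ i, w i * Δ i| := le_abs_self _
        _ = |∑ i, w i * Δ i| := by rw [abs_mul, abs_neg, hy1, one_mul]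
        _ ≤ ∑ i, |w i * Δ i| := Finset.abs_sum_le_sum_abs _ _
        _ ≤ ε * S := hP
    rw [slope_eq _ hsy]
    calc (g (z + -y * ∑ i, w i * Δ i) - g z) / (-y * ∑ i, w i * Δ i) * ∑ i, |w i * Δ i|
        ≤ (g (z + ε * S) - g z) / (ε * S) * ∑ i, |w i * Δ i| :=
          mul_le_mul_of_nonneg_right (slope_le _ hsy hδle) hPnn
      _ ≤ (g (z + ε * S) - g z) / (ε * S) * (ε * S) :=
          mul_le_mul_of_nonneg_left hP (slope_nonneg _ hεS.ne')
      _ = g (z + ε * S) - g z := by field_simp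
  refine ⟨le_antisymm (csSup_le ⟨_, hmemv⟩ hub) (le_csSup ⟨_, hub⟩ hmemv), hatt⟩
end
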